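/- Under the illumination setup, for any fixed λ̂ with 0 < λ̂ < 1 the following are equivalent: (i) there exists z ∈ ℝ² such that r₄(s) = z + λ̂·(r₃(s) − z) for all s (the illumination curve Π^δ̂(K) is mapped onto its centroid curve Γ^δ̂(K) by a homothety with ratio λ̂); (ii) ‖c(s)‖³ = 24δ̂λ̂ for all s, where ‖c(s)‖³ = −4·det(c(s), γ'(s))·det(c(s), γ'(t(s))) / det(γ'(s), γ'(t(s))) is the cubed affine distance between the endpoints of the chord c(s). -/

import Mathlib

open Real MeasureTheory intervalIntegral

noncomputable section

/-- The Euclidean plane. -/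
abbrev R2 := EuclideanSpace ℝ (Fin 2)

/-- The planar determinant `det(u,v) = u₁v₂ − u₂v₁`. -/
def det2 (u v : R2) : ℝ := u 0 * v 1 - u 1 * v 0

/-- The intersection point of the tangent lines to `γ` at `γ(s)` and `γ(t(s))`. -/
def tangentPole (γ : ℝ → R2) (t : ℝ → ℝ) (s : ℝ) : R2 :=
  γ s + (det2 (γ (t s) - γ s) (deriv γ (t s)) / det2 (deriv γ s) (deriv γ (t s))) • deriv γ s

/-- The centroid curve of illumination
`r₄(s) = r₃(s) − (1/(3δ̂))·∫_s^{t(s)} det(γ(u) − r₃(s), γ'(u))·(γ(u) − r₃(s)) du`. -/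
def illumCentroid (γ : ℝ → R2) (t : ℝ → ℝ) (δ' : ℝ) (s : ℝ) : R2 :=
  tangentPole γ t s -
    (1/(3*δ')) • ∫ u in s..t s,
      det2 (γ u - tangentPole γ t s) (deriv γ u) • (γ u - tangentPole γ t s)

namespace S9

@[simp] lemma det2_zero_left (v : R2) : det2 0 v = 0 := by simp [det2]
@[simp] lemma det2_zero_right (v : R2) : det2 v 0 = 0 := by simp [det2]
lemma det2_self (u : R2) : det2 u u = 0 := by simp [det2]; ring

lemma det2_collinear {v c : R2} (h : det2 v c = 0) (hc : c ≠ 0) : ∃ κ : ℝ, v = κ • c := by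
  rw [det2, sub_eq_zero] at h
  by_cases h0 : c 0 ≠ 0
  · refine ⟨v 0 / c 0, ?_⟩
    ext i; fin_cases i <;> simp <;> field_simp
    linarith [h]
  · push_neg at h0
    have h1 : c 1 ≠ 0 := by
      intro h1; apply hc; ext i; fin_cases i <;> simp [h0, h1]
    refine ⟨v 1 / c 1, ?_⟩
    have hv0 : v 0 = 0 := by
      have : v 0 * c 1 = 0 := by rw [h, h0]; ring
      rcases mul_eq_zero.mp this with h' | h'
      · exact h'
      · exact absurd h' h1
    ext i; fin_cases i <;> simp [hv0, h0] <;> field_simp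

lemma hasDerivAt_comp_apply {f : ℝ → R2} {v : R2} {s : ℝ} (h : HasDerivAt f v s) (i : Fin 2) :
    HasDerivAt (fun s => f s i) (v i) s := by
  have := (EuclideanSpace.proj (𝕜 := ℝ) i).hasFDerivAt.comp_hasDerivAt s h
  exact this

lemma hasDerivAt_det2 {f g : ℝ → R2} {f' g' : R2} {s : ℝ}
    (hf : HasDerivAt f f' s) (hg : HasDerivAt g g' s) :
    HasDerivAt (fun s => det2 (f s) (g s)) (det2 f' (g s) + det2 (f s) g') s := by
  have h0 := hasDerivAt_comp_apply hf 0
  have h1 := hasDerivAt_comp_apply hf 1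
  have g0 := hasDerivAt_comp_apply hg 0
  have g1 := hasDerivAt_comp_apply hg 1
  have := (h0.mul g1).sub (h1.mul g0)
  have e : det2 f' (g s) + det2 (f s) g' = f' 0 * g s 1 + f s 0 * g' 1 - (f' 1 * g s 0 + f s 1 * g' 0) := by
    simp [det2]; ring
  rw [e]
  exact this

lemma continuous_apply2 {f : ℝ → R2} (hf : Continuous f) (i : Fin 2) :
    Continuous fun s => f s i := by
  exact (EuclideanSpace.proj (𝕜 := ℝ) i).continuous.comp hf

lemma continuous_det2 {f g : ℝ → R2} (hf : Continuous f) (hg : Continuous g) :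
    Continuous fun s => det2 (f s) (g s) := by
  unfold det2
  exact ((continuous_apply2 hf 0).mul (continuous_apply2 hg 1)).sub
    ((continuous_apply2 hf 1).mul (continuous_apply2 hg 0))

lemma primitive_hasDerivAt {E : Type*} [NormedAddCommGroup E] [NormedSpace ℝ E] [CompleteSpace E]
    {f : ℝ → E} (hf : Continuous f) (x : ℝ) :
    HasDerivAt (fun y => ∫ u in (0:ℝ)..y, f u) (f x) x :=
  intervalIntegral.integral_hasDerivAt_right (hf.intervalIntegrable 0 x)
    hf.stronglyMeasurable.stronglyMeasurableAtFilter hf.continuousAt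

/-- chord of `γ` between `s` and `t s`. -/
def ch (γ : ℝ → R2) (t : ℝ → ℝ) (s : ℝ) : R2 := γ (t s) - γ s

/-- coefficient of the tangent pole. -/
def af (γ : ℝ → R2) (t : ℝ → ℝ) (s : ℝ) : ℝ :=
  det2 (ch γ t s) (deriv γ (t s)) / det2 (deriv γ s) (deriv γ (t s))

/-- derivative of the tangent pole curve. -/
def v3 (γ : ℝ → R2) (t : ℝ → ℝ) (s : ℝ) : R2 :=
  deriv γ s + (af γ t s • deriv (deriv γ) s + deriv (af γ t) s • deriv γ s)

/-- (minus) the cubed affine distance over 4. -/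
def f0 (γ : ℝ → R2) (t : ℝ → ℝ) (s : ℝ) : ℝ := -(af γ t s * det2 (ch γ t s) (deriv γ s))

lemma tangentPole_eq (γ : ℝ → R2) (t : ℝ → ℝ) (s : ℝ) :
    tangentPole γ t s = γ s + af γ t s • deriv γ s := rfl

end S9
namespace S9

variable {γ : ℝ → R2} {t : ℝ → ℝ}

lemma contDiff_deriv_of_three (hγ : ContDiff ℝ 3 γ) : ContDiff ℝ 2 (deriv γ) := by
  have h3 : (3 : WithTop ℕ∞) = 2 + 1 := by norm_num
  rw [h3] at hγ
  exact (contDiff_succ_iff_deriv.mp hγ).2.2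

lemma hasDerivAt_g1 (hγ : ContDiff ℝ 3 γ) (s : ℝ) : HasDerivAt γ (deriv γ s) s :=
  ((hγ.differentiable (by norm_num)) s).hasDerivAt

lemma hasDerivAt_g2 (hγ : ContDiff ℝ 3 γ) (s : ℝ) :
    HasDerivAt (deriv γ) (deriv (deriv γ) s) s :=
  (((contDiff_deriv_of_three hγ).differentiable (by norm_num)) s).hasDerivAt

lemma hasDerivAt_t (ht : ContDiff ℝ 1 t) (s : ℝ) : HasDerivAt t (deriv t s) s :=
  ((ht.differentiable one_ne_zero) s).hasDerivAt

lemma hasDerivAt_ch (hγ : ContDiff ℝ 3 γ) (ht : ContDiff ℝ 1 t) (s : ℝ) :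
    HasDerivAt (ch γ t) (deriv t s • deriv γ (t s) - deriv γ s) s := by
  have h1 : HasDerivAt (fun s => γ (t s)) (deriv t s • deriv γ (t s)) s := by
    exact (hasDerivAt_g1 hγ (t s)).scomp s (hasDerivAt_t ht s)
  exact h1.sub (hasDerivAt_g1 hγ s)

lemma hasDerivAt_bt (hγ : ContDiff ℝ 3 γ) (ht : ContDiff ℝ 1 t) (s : ℝ) :
    HasDerivAt (fun s => deriv γ (t s)) (deriv t s • deriv (deriv γ) (t s)) s := by
  exact (hasDerivAt_g2 hγ (t s)).scomp s (hasDerivAt_t ht s)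

lemma hasDerivAt_af (hγ : ContDiff ℝ 3 γ) (ht : ContDiff ℝ 1 t)
    (hpar : ∀ s, det2 (deriv γ s) (deriv γ (t s)) ≠ 0) (s : ℝ) :
    HasDerivAt (af γ t) (deriv (af γ t) s) s := by
  have hnum := hasDerivAt_det2 (hasDerivAt_ch hγ ht s) (hasDerivAt_bt hγ ht s)
  have hden := hasDerivAt_det2 (hasDerivAt_g2 hγ s) (hasDerivAt_bt hγ ht s)
  exact ((hnum.div hden (hpar s)).differentiableAt).hasDerivAt

lemma hasDerivAt_tangentPole (hγ : ContDiff ℝ 3 γ) (ht : ContDiff ℝ 1 t)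
    (hpar : ∀ s, det2 (deriv γ s) (deriv γ (t s)) ≠ 0) (s : ℝ) :
    HasDerivAt (tangentPole γ t) (v3 γ t s) s := by
  have := (hasDerivAt_g1 hγ s).add ((hasDerivAt_af hγ ht hpar s).smul (hasDerivAt_g2 hγ s))
  exact this

lemma det2_g1_v3 (γ : ℝ → R2) (t : ℝ → ℝ) (s : ℝ) :
    det2 (deriv γ s) (v3 γ t s) = af γ t s * det2 (deriv γ s) (deriv (deriv γ) s) := by
  simp [v3, det2]; ring

lemma af_ne_zero (hpar : ∀ s, det2 (deriv γ s) (deriv γ (t s)) ≠ 0)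
    (hc2 : ∀ s, det2 (γ (t s) - γ s) (deriv γ (t s)) ≠ 0) (s : ℝ) : af γ t s ≠ 0 :=
  div_ne_zero (hc2 s) (hpar s)

lemma ch_ne_zero (hc1 : ∀ s, det2 (γ (t s) - γ s) (deriv γ s) ≠ 0) (s : ℝ) :
    ch γ t s ≠ 0 := by
  intro h
  have : det2 (γ (t s) - γ s) (deriv γ s) = 0 := by
    rw [show (γ (t s) - γ s : R2) = ch γ t s from rfl, h, det2_zero_left]
  exact hc1 s this

lemma v3_ne_zero (hpar : ∀ s, det2 (deriv γ s) (deriv γ (t s)) ≠ 0)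
    (hc2 : ∀ s, det2 (γ (t s) - γ s) (deriv γ (t s)) ≠ 0)
    (hcurv : ∀ s, 0 < det2 (deriv γ s) (deriv (deriv γ) s)) (s : ℝ) :
    v3 γ t s ≠ 0 := by
  intro h
  have h1 := det2_g1_v3 γ t s
  rw [h, det2_zero_right] at h1
  exact mul_ne_zero (af_ne_zero hpar hc2 s) (ne_of_gt (hcurv s)) h1.symm

lemma tangency1 (γ : ℝ → R2) (t : ℝ → ℝ) (s : ℝ) :
    det2 (γ s - tangentPole γ t s) (deriv γ s) = 0 := by
  rw [tangentPole_eq]; simp [det2]; ring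

lemma tangency2 (hpar : ∀ s, det2 (deriv γ s) (deriv γ (t s)) ≠ 0) (s : ℝ) :
    det2 (γ (t s) - tangentPole γ t s) (deriv γ (t s)) = 0 := by
  rw [tangentPole_eq]
  have h : det2 (γ (t s) - (γ s + af γ t s • deriv γ s)) (deriv γ (t s))
      = det2 (ch γ t s) (deriv γ (t s)) - af γ t s * det2 (deriv γ s) (deriv γ (t s)) := by
    simp [det2, ch]; ring
  rw [h, af, div_mul_eq_mul_div, mul_div_assoc, div_self (hpar s), mul_one, sub_self]

end S9
namespace S9

variable {γ : ℝ → R2} {t : ℝ → ℝ}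

/-- primitive of `det2 γ γ'`. -/
def Phi (γ : ℝ → R2) (x : ℝ) : ℝ := ∫ u in (0:ℝ)..x, det2 (γ u) (deriv γ u)

/-- primitive of `det2 γ γ' • γ`. -/
def Psi (γ : ℝ → R2) (x : ℝ) : R2 := ∫ u in (0:ℝ)..x, det2 (γ u) (deriv γ u) • γ u

/-- primitive of `γ'ᵢ • γ`. -/
def Pc (γ : ℝ → R2) (i : Fin 2) (x : ℝ) : R2 := ∫ u in (0:ℝ)..x, (deriv γ u i) • γ u

lemma cont_g1 (hγ : ContDiff ℝ 3 γ) : Continuous (deriv γ) :=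
  hγ.continuous_deriv (by norm_num)

lemma cont_detgg (hγ : ContDiff ℝ 3 γ) : Continuous fun u => det2 (γ u) (deriv γ u) :=
  continuous_det2 hγ.continuous (cont_g1 hγ)

lemma hasDerivAt_Phi (hγ : ContDiff ℝ 3 γ) (x : ℝ) :
    HasDerivAt (Phi γ) (det2 (γ x) (deriv γ x)) x :=
  primitive_hasDerivAt (cont_detgg hγ) x

lemma hasDerivAt_Psi (hγ : ContDiff ℝ 3 γ) (x : ℝ) :
    HasDerivAt (Psi γ) (det2 (γ x) (deriv γ x) • γ x) x :=
  primitive_hasDerivAt ((cont_detgg hγ).smul hγ.continuous) x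

lemma hasDerivAt_Pc (hγ : ContDiff ℝ 3 γ) (i : Fin 2) (x : ℝ) :
    HasDerivAt (Pc γ i) ((deriv γ x i) • γ x) x :=
  primitive_hasDerivAt ((continuous_apply2 (cont_g1 hγ) i).smul hγ.continuous) x

lemma Phi_sub (hγ : ContDiff ℝ 3 γ) (a b : ℝ) :
    Phi γ b - Phi γ a = ∫ u in a..b, det2 (γ u) (deriv γ u) :=
  intervalIntegral.integral_interval_sub_left
    ((cont_detgg hγ).intervalIntegrable _ _) ((cont_detgg hγ).intervalIntegrable _ _)

lemma Psi_sub (hγ : ContDiff ℝ 3 γ) (a b : ℝ) :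
    Psi γ b - Psi γ a = ∫ u in a..b, det2 (γ u) (deriv γ u) • γ u :=
  intervalIntegral.integral_interval_sub_left
    (((cont_detgg hγ).smul hγ.continuous).intervalIntegrable _ _)
    (((cont_detgg hγ).smul hγ.continuous).intervalIntegrable _ _)

lemma Pc_sub (hγ : ContDiff ℝ 3 γ) (i : Fin 2) (a b : ℝ) :
    Pc γ i b - Pc γ i a = ∫ u in a..b, (deriv γ u i) • γ u :=
  intervalIntegral.integral_interval_sub_left
    (((continuous_apply2 (cont_g1 hγ) i).smul hγ.continuous).intervalIntegrable _ _)
    (((continuous_apply2 (cont_g1 hγ) i).smul hγ.continuous).intervalIntegrable _ _)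

lemma det2_sub_right' (w x y : R2) : det2 w (x - y) = det2 w x - det2 w y := by
  simp [det2]; ring

/-- chord FTC. -/
lemma integral_det2_const (hγ : ContDiff ℝ 3 γ) (w : R2) (a b : ℝ) :
    ∫ u in a..b, det2 w (deriv γ u) = det2 w (γ b - γ a) := by
  have h : ∀ u ∈ Set.uIcc a b, HasDerivAt (fun u => det2 w (γ u)) (det2 w (deriv γ u)) u := by
    intro u _
    simpa using hasDerivAt_det2 (hasDerivAt_const u w) (hasDerivAt_g1 hγ u)
  rw [intervalIntegral.integral_eq_sub_of_hasDerivAt h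
    ((continuous_det2 continuous_const (cont_g1 hγ)).intervalIntegrable _ _)]
  rw [det2_sub_right']

/-- the area integral in closed form. -/
lemma integral_A (hγ : ContDiff ℝ 3 γ) (w : R2) (a b : ℝ) :
    ∫ u in a..b, det2 (γ u - w) (deriv γ u)
      = (Phi γ b - Phi γ a) - det2 w (γ b - γ a) := by
  have h : (∫ u in a..b, det2 (γ u - w) (deriv γ u))
      = ∫ u in a..b, (det2 (γ u) (deriv γ u) - det2 w (deriv γ u)) := by
    apply intervalIntegral.integral_congr
    intro u _
    simp [det2]; ring
  rw [h, intervalIntegral.integral_sub ((cont_detgg hγ).intervalIntegrable _ _)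
    ((continuous_det2 continuous_const (cont_g1 hγ)).intervalIntegrable _ _),
    Phi_sub hγ, integral_det2_const hγ]

/-- moment integral against a fixed vector. -/
lemma integral_det2_smul (hγ : ContDiff ℝ 3 γ) (v : R2) (a b : ℝ) :
    ∫ u in a..b, det2 v (deriv γ u) • γ u
      = v 0 • (Pc γ 1 b - Pc γ 1 a) - v 1 • (Pc γ 0 b - Pc γ 0 a) := by
  have h : (∫ u in a..b, det2 v (deriv γ u) • γ u)
      = ∫ u in a..b, (v 0 • ((deriv γ u 1) • γ u) - v 1 • ((deriv γ u 0) • γ u)) := by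
    apply intervalIntegral.integral_congr
    intro u _
    ext i; fin_cases i <;> simp [det2] <;> ring
  rw [h, intervalIntegral.integral_sub, intervalIntegral.integral_smul,
    intervalIntegral.integral_smul, Pc_sub hγ, Pc_sub hγ]
  · exact Continuous.intervalIntegrable (u := fun u => v 0 • ((deriv γ u 1) • γ u)) (((continuous_apply2 (cont_g1 hγ) 1).smul hγ.continuous).const_smul (v 0)) _ _
  · exact Continuous.intervalIntegrable (u := fun u => v 1 • ((deriv γ u 0) • γ u)) (((continuous_apply2 (cont_g1 hγ) 0).smul hγ.continuous).const_smul (v 1)) _ _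

end S9
namespace S9

variable {γ : ℝ → R2} {t : ℝ → ℝ}

/-- the moment integral of the illumination region, in closed form. -/
lemma integral_J (hγ : ContDiff ℝ 3 γ) (w : R2) (a b : ℝ) :
    ∫ u in a..b, det2 (γ u - w) (deriv γ u) • (γ u - w)
      = (Psi γ b - Psi γ a)
        - (w 0 • (Pc γ 1 b - Pc γ 1 a) - w 1 • (Pc γ 0 b - Pc γ 0 a))
        - (Phi γ b - Phi γ a) • w + det2 w (γ b - γ a) • w := by
  have c0 : Continuous γ := hγ.continuous
  have c1 : Continuous (deriv γ) := cont_g1 hγ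
  have i1 : IntervalIntegrable (fun u => det2 (γ u) (deriv γ u) • γ u) volume a b :=
    ((cont_detgg hγ).smul c0).intervalIntegrable _ _
  have i2 : IntervalIntegrable (fun u => det2 w (deriv γ u) • γ u) volume a b :=
    ((continuous_det2 continuous_const c1).smul c0).intervalIntegrable _ _
  have i3 : IntervalIntegrable (fun u => det2 (γ u) (deriv γ u) • w) volume a b :=
    ((cont_detgg hγ).smul continuous_const).intervalIntegrable _ _
  have i4 : IntervalIntegrable (fun u => det2 w (deriv γ u) • w) volume a b :=
    ((continuous_det2 continuous_const c1).smul continuous_const).intervalIntegrable _ _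
  have h : (∫ u in a..b, det2 (γ u - w) (deriv γ u) • (γ u - w))
      = ∫ u in a..b, (det2 (γ u) (deriv γ u) • γ u - det2 w (deriv γ u) • γ u
          - det2 (γ u) (deriv γ u) • w + det2 w (deriv γ u) • w) := by
    apply intervalIntegral.integral_congr
    intro u _
    ext i; fin_cases i <;> simp [det2] <;> ring
  rw [h, intervalIntegral.integral_add ((i1.sub i2).sub i3) i4,
    intervalIntegral.integral_sub (i1.sub i2) i3, intervalIntegral.integral_sub i1 i2,
    Psi_sub hγ, integral_det2_smul hγ, intervalIntegral.integral_smul_const,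
    intervalIntegral.integral_smul_const, Phi_sub hγ, integral_det2_const hγ]

/-- the key `I` integral. -/
lemma integral_I (hγ : ContDiff ℝ 3 γ) (s : ℝ) (m : ℝ)
    (hm : ∫ u in s..t s, det2 (γ u - tangentPole γ t s) (deriv γ u) = m) :
    ∫ u in s..t s, det2 (ch γ t s) (deriv γ u) • (γ u - tangentPole γ t s)
      = ((f0 γ t s + m)/2) • ch γ t s := by
  have c0 : Continuous γ := hγ.continuous
  have c1 : Continuous (deriv γ) := cont_g1 hγ
  have contI : Continuous fun u => det2 (ch γ t s) (deriv γ u) • (γ u - tangentPole γ t s) :=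
    (continuous_det2 continuous_const c1).smul (c0.sub continuous_const)
  have contB : Continuous fun u =>
      det2 (γ u - tangentPole γ t s) (deriv γ u) • (ch γ t s) :=
    (continuous_det2 (c0.sub continuous_const) c1).smul continuous_const
  have hG : ∀ u ∈ Set.uIcc s (t s),
      HasDerivAt (fun u => det2 (ch γ t s) (γ u - tangentPole γ t s) • (γ u - tangentPole γ t s))
        ((2:ℝ) • (det2 (ch γ t s) (deriv γ u) • (γ u - tangentPole γ t s))
          - det2 (γ u - tangentPole γ t s) (deriv γ u) • (ch γ t s)) u := by
    intro u _
    have h1 : HasDerivAt (fun u => γ u - tangentPole γ t s) (deriv γ u) u :=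
      (hasDerivAt_g1 hγ u).sub_const _
    have h2 : HasDerivAt (fun u => det2 (ch γ t s) (γ u - tangentPole γ t s))
        (det2 (ch γ t s) (deriv γ u)) u := by
      simpa using hasDerivAt_det2 (hasDerivAt_const u (ch γ t s)) h1
    have h3 := h2.smul h1
    have hval : det2 (ch γ t s) (γ u - tangentPole γ t s) • deriv γ u
          + det2 (ch γ t s) (deriv γ u) • (γ u - tangentPole γ t s)
        = (2:ℝ) • (det2 (ch γ t s) (deriv γ u) • (γ u - tangentPole γ t s))
          - det2 (γ u - tangentPole γ t s) (deriv γ u) • (ch γ t s) := by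
      ext i; fin_cases i <;> simp [det2] <;> ring
    rw [hval] at h3
    exact h3
  have hFTC := intervalIntegral.integral_eq_sub_of_hasDerivAt hG
    (((contI.const_smul (2:ℝ)).sub contB).intervalIntegrable _ _)
  rw [intervalIntegral.integral_sub (f := fun u => (2:ℝ) • (det2 (ch γ t s) (deriv γ u) • (γ u - tangentPole γ t s)))
      (g := fun u => det2 (γ u - tangentPole γ t s) (deriv γ u) • ch γ t s)
      ((contI.const_smul (2:ℝ)).intervalIntegrable _ _)
      (contB.intervalIntegrable _ _),
    intervalIntegral.integral_smul, intervalIntegral.integral_smul_const, hm] at hFTC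
  have e1 : det2 (ch γ t s) (γ (t s) - tangentPole γ t s) = f0 γ t s := by
    rw [tangentPole_eq]; simp [det2, f0, ch]; ring
  have e2 : det2 (ch γ t s) (γ s - tangentPole γ t s) = f0 γ t s := by
    rw [tangentPole_eq]; simp [det2, f0, ch]; ring
  rw [e1, e2] at hFTC
  have hGdiff : f0 γ t s • (γ (t s) - tangentPole γ t s) - f0 γ t s • (γ s - tangentPole γ t s)
      = f0 γ t s • ch γ t s := by
    ext i; fin_cases i <;> simp [ch] <;> ring
  rw [hGdiff] at hFTC
  have h2I : (2:ℝ) • (∫ u in s..t s, det2 (ch γ t s) (deriv γ u) • (γ u - tangentPole γ t s))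
      = f0 γ t s • ch γ t s + m • ch γ t s := by
    rw [← hFTC]; abel
  ext i
  have h3 := congrArg (fun v : R2 => v i) h2I
  simp only [PiLp.smul_apply, PiLp.add_apply, smul_eq_mul] at h3
  simp only [PiLp.smul_apply, smul_eq_mul]
  linarith

end S9
namespace S9

variable {γ : ℝ → R2} {t : ℝ → ℝ}

/-- the tangent pole moves parallel to the chord. -/
lemma det2_v3_ch (hγ : ContDiff ℝ 3 γ) (ht : ContDiff ℝ 1 t)
    (hpar : ∀ s, det2 (deriv γ s) (deriv γ (t s)) ≠ 0) {δ' : ℝ}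
    (hA : ∀ s, -(1/2) * ∫ u in s..t s, det2 (γ u - tangentPole γ t s) (deriv γ u) = δ')
    (s : ℝ) : det2 (v3 γ t s) (ch γ t s) = 0 := by
  have hA2 : ∀ r, (Phi γ (t r) - Phi γ r) - det2 (tangentPole γ t r) (γ (t r) - γ r)
      = -(2*δ') := by
    intro r
    have h1 := hA r
    rw [integral_A hγ (tangentPole γ t r) r (t r)] at h1
    linarith
  have hfun : (fun r => (Phi γ (t r) - Phi γ r) - det2 (tangentPole γ t r) (γ (t r) - γ r))
      = fun _ => -(2*δ') := funext hA2
  have hD : HasDerivAt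
      (fun r => (Phi γ (t r) - Phi γ r) - det2 (tangentPole γ t r) (γ (t r) - γ r))
      ((det2 (γ (t s)) (deriv γ (t s)) * deriv t s - det2 (γ s) (deriv γ s))
        - (det2 (v3 γ t s) (γ (t s) - γ s)
            + det2 (tangentPole γ t s) (deriv t s • deriv γ (t s) - deriv γ s))) s := by
    have h1 : HasDerivAt (fun r => Phi γ (t r))
        (det2 (γ (t s)) (deriv γ (t s)) * deriv t s) s :=
      (hasDerivAt_Phi hγ (t s)).comp s (hasDerivAt_t ht s)
    have h2 := (h1.sub (hasDerivAt_Phi hγ s)).sub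
      (hasDerivAt_det2 (hasDerivAt_tangentPole hγ ht hpar s) (hasDerivAt_ch hγ ht s))
    exact h2
  rw [hfun] at hD
  have h0 := (hasDerivAt_const s (-(2*δ'))).unique hD
  have sc1 : det2 (tangentPole γ t s) (deriv γ (t s)) = det2 (γ (t s)) (deriv γ (t s)) := by
    have h := tangency2 hpar s
    simp [det2] at h ⊢; linarith
  have sc2 : det2 (tangentPole γ t s) (deriv γ s) = det2 (γ s) (deriv γ s) := by
    have h := tangency1 γ t s
    simp [det2] at h ⊢; linarith
  have hexp : det2 (tangentPole γ t s) (deriv t s • deriv γ (t s) - deriv γ s)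
      = deriv t s * det2 (tangentPole γ t s) (deriv γ (t s))
        - det2 (tangentPole γ t s) (deriv γ s) := by
    simp [det2]; ring
  rw [hexp, sc1, sc2] at h0
  have : det2 (v3 γ t s) (γ (t s) - γ s) = 0 := by linarith
  exact this

/-- evaluation of the moment term. -/
lemma moment_eq (hγ : ContDiff ℝ 3 γ) (ht : ContDiff ℝ 1 t)
    (hpar : ∀ s, det2 (deriv γ s) (deriv γ (t s)) ≠ 0)
    (hc1 : ∀ s, det2 (γ (t s) - γ s) (deriv γ s) ≠ 0) {δ' : ℝ}
    (hA : ∀ s, -(1/2) * ∫ u in s..t s, det2 (γ u - tangentPole γ t s) (deriv γ u) = δ')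
    (s : ℝ) :
    v3 γ t s 0 • (Pc γ 1 (t s) - Pc γ 1 s) - v3 γ t s 1 • (Pc γ 0 (t s) - Pc γ 0 s)
      = ((f0 γ t s - 2*δ')/2) • v3 γ t s := by
  have c0 : Continuous γ := hγ.continuous
  have c1 : Continuous (deriv γ) := cont_g1 hγ
  obtain ⟨κ, hκ⟩ := det2_collinear (det2_v3_ch hγ ht hpar hA s) (ch_ne_zero hc1 s)
  have hm : ∫ u in s..t s, det2 (γ u - tangentPole γ t s) (deriv γ u) = -(2*δ') := by
    have := hA s; linarith
  rw [← integral_det2_smul hγ (v3 γ t s) s (t s), hκ]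
  have hsplit : (∫ u in s..t s, det2 (κ • ch γ t s) (deriv γ u) • γ u)
      = ∫ u in s..t s, (κ • (det2 (ch γ t s) (deriv γ u) • (γ u - tangentPole γ t s))
          + κ • (det2 (ch γ t s) (deriv γ u) • tangentPole γ t s)) := by
    apply intervalIntegral.integral_congr
    intro u _
    ext i; fin_cases i <;> simp [det2] <;> ring
  have iA : IntervalIntegrable
      (fun u => κ • (det2 (ch γ t s) (deriv γ u) • (γ u - tangentPole γ t s))) volume s (t s) :=
    (((continuous_det2 continuous_const c1).smul (c0.sub continuous_const)).const_smul κ).intervalIntegrable _ _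
  have iB : IntervalIntegrable
      (fun u => κ • (det2 (ch γ t s) (deriv γ u) • tangentPole γ t s)) volume s (t s) :=
    (((continuous_det2 continuous_const c1).smul continuous_const).const_smul κ).intervalIntegrable _ _
  rw [hsplit, intervalIntegral.integral_add iA iB, intervalIntegral.integral_smul,
    intervalIntegral.integral_smul, integral_I hγ s (-(2*δ')) hm]
  have h2 : (∫ u in s..t s, det2 (ch γ t s) (deriv γ u) • tangentPole γ t s)
      = det2 (ch γ t s) (γ (t s) - γ s) • tangentPole γ t s := by
    rw [intervalIntegral.integral_smul_const, integral_det2_const hγ]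
  rw [h2]
  have h3 : det2 (ch γ t s) (γ (t s) - γ s) = 0 := det2_self _
  rw [h3, zero_smul, smul_zero, add_zero]
  ext i
  simp only [PiLp.smul_apply, smul_eq_mul]
  ring

end S9
namespace S9

variable {γ : ℝ → R2} {t : ℝ → ℝ}

lemma hasDerivAt_illumCentroid (hγ : ContDiff ℝ 3 γ) (ht : ContDiff ℝ 1 t)
    (hpar : ∀ s, det2 (deriv γ s) (deriv γ (t s)) ≠ 0)
    (hc1 : ∀ s, det2 (γ (t s) - γ s) (deriv γ s) ≠ 0) {δ' : ℝ} (hδ0 : 0 < δ')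
    (hA : ∀ s, -(1/2) * ∫ u in s..t s, det2 (γ u - tangentPole γ t s) (deriv γ u) = δ')
    (s : ℝ) :
    HasDerivAt (illumCentroid γ t δ') ((f0 γ t s / (6*δ')) • v3 γ t s) s := by
  have hδ : δ' ≠ 0 := ne_of_gt hδ0
  have hr4eq : illumCentroid γ t δ' = fun r =>
      tangentPole γ t r - (1/(3*δ')) • (
        (Psi γ (t r) - Psi γ r)
        - (tangentPole γ t r 0 • (Pc γ 1 (t r) - Pc γ 1 r)
            - tangentPole γ t r 1 • (Pc γ 0 (t r) - Pc γ 0 r))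
        - (Phi γ (t r) - Phi γ r) • tangentPole γ t r
        + det2 (tangentPole γ t r) (γ (t r) - γ r) • tangentPole γ t r) := by
    funext r
    rw [illumCentroid, integral_J hγ (tangentPole γ t r) r (t r)]
  rw [hr4eq]
  have hw := hasDerivAt_tangentPole hγ ht hpar s
  have hw0 := hasDerivAt_comp_apply hw 0
  have hw1 := hasDerivAt_comp_apply hw 1
  have hPsiD : HasDerivAt (fun r => Psi γ (t r) - Psi γ r)
      (deriv t s • (det2 (γ (t s)) (deriv γ (t s)) • γ (t s))
        - det2 (γ s) (deriv γ s) • γ s) s := by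
    have h1 : HasDerivAt (fun r => Psi γ (t r))
        (deriv t s • (det2 (γ (t s)) (deriv γ (t s)) • γ (t s))) s := by
      exact (hasDerivAt_Psi hγ (t s)).scomp s (hasDerivAt_t ht s)
    exact h1.sub (hasDerivAt_Psi hγ s)
  have hPc1D : HasDerivAt (fun r => Pc γ 1 (t r) - Pc γ 1 r)
      (deriv t s • ((deriv γ (t s) 1) • γ (t s)) - (deriv γ s 1) • γ s) s := by
    have h1 : HasDerivAt (fun r => Pc γ 1 (t r))
        (deriv t s • ((deriv γ (t s) 1) • γ (t s))) s := by
      exact (hasDerivAt_Pc hγ 1 (t s)).scomp s (hasDerivAt_t ht s)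
    exact h1.sub (hasDerivAt_Pc hγ 1 s)
  have hPc0D : HasDerivAt (fun r => Pc γ 0 (t r) - Pc γ 0 r)
      (deriv t s • ((deriv γ (t s) 0) • γ (t s)) - (deriv γ s 0) • γ s) s := by
    have h1 : HasDerivAt (fun r => Pc γ 0 (t r))
        (deriv t s • ((deriv γ (t s) 0) • γ (t s))) s := by
      exact (hasDerivAt_Pc hγ 0 (t s)).scomp s (hasDerivAt_t ht s)
    exact h1.sub (hasDerivAt_Pc hγ 0 s)
  have hPhiD : HasDerivAt (fun r => Phi γ (t r) - Phi γ r)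
      (det2 (γ (t s)) (deriv γ (t s)) * deriv t s - det2 (γ s) (deriv γ s)) s := by
    have h1 : HasDerivAt (fun r => Phi γ (t r))
        (det2 (γ (t s)) (deriv γ (t s)) * deriv t s) s :=
      (hasDerivAt_Phi hγ (t s)).comp s (hasDerivAt_t ht s)
    exact h1.sub (hasDerivAt_Phi hγ s)
  have hT2 := (hw0.smul hPc1D).sub (hw1.smul hPc0D)
  have hT3 := hPhiD.smul hw
  have hT4 := (hasDerivAt_det2 hw (hasDerivAt_ch hγ ht s)).smul hw
  have hJD := ((hPsiD.sub hT2).sub hT3).add hT4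
  -- rewrite the value of hJD
  have hmom := moment_eq hγ ht hpar hc1 hA s
  have sc1 : det2 (tangentPole γ t s) (deriv γ (t s)) = det2 (γ (t s)) (deriv γ (t s)) := by
    have h := tangency2 hpar s
    simp [det2] at h ⊢; linarith
  have sc2 : det2 (tangentPole γ t s) (deriv γ s) = det2 (γ s) (deriv γ s) := by
    have h := tangency1 γ t s
    simp [det2] at h ⊢; linarith
  have sc3 : det2 (v3 γ t s) (γ (t s) - γ s) = 0 := det2_v3_ch hγ ht hpar hA s
  have sc4 : (Phi γ (t s) - Phi γ s) - det2 (tangentPole γ t s) (γ (t s) - γ s) = -(2*δ') := by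
    have h1 := hA s
    rw [integral_A hγ (tangentPole γ t s) s (t s)] at h1
    linarith
  have hval : (deriv t s • (det2 (γ (t s)) (deriv γ (t s)) • γ (t s))
        - det2 (γ s) (deriv γ s) • γ s)
      - (tangentPole γ t s 0 • (deriv t s • ((deriv γ (t s) 1) • γ (t s)) - (deriv γ s 1) • γ s)
          + v3 γ t s 0 • (Pc γ 1 (t s) - Pc γ 1 s)
        - (tangentPole γ t s 1 • (deriv t s • ((deriv γ (t s) 0) • γ (t s)) - (deriv γ s 0) • γ s)
          + v3 γ t s 1 • (Pc γ 0 (t s) - Pc γ 0 s)))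
      - ((Phi γ (t s) - Phi γ s) • v3 γ t s
          + (det2 (γ (t s)) (deriv γ (t s)) * deriv t s - det2 (γ s) (deriv γ s)) •
            tangentPole γ t s)
      + (det2 (tangentPole γ t s) (ch γ t s) • v3 γ t s
          + (det2 (v3 γ t s) (ch γ t s)
              + det2 (tangentPole γ t s) (deriv t s • deriv γ (t s) - deriv γ s)) •
            tangentPole γ t s)
      = ((6*δ' - f0 γ t s)/2) • v3 γ t s := by
    ext i
    have hmom_i := congrArg (fun v : R2 => v i) hmom
    simp only [det2, ch, PiLp.smul_apply, PiLp.sub_apply, PiLp.add_apply, smul_eq_mul]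
      at hmom_i sc1 sc2 sc3 sc4 ⊢
    linear_combination (- (deriv t s * (γ (t s) i - tangentPole γ t s i))) * sc1
      + (γ s i - tangentPole γ t s i) * sc2 + (tangentPole γ t s i) * sc3
      - hmom_i - (v3 γ t s i) * sc4
  rw [hval] at hJD
  have hr4D := hw.sub (hJD.const_smul (1/(3*δ')))
  have hfin : v3 γ t s - (1/(3*δ')) • (((6*δ' - f0 γ t s)/2) • v3 γ t s)
      = (f0 γ t s / (6*δ')) • v3 γ t s := by
    rw [smul_smul]
    ext i
    simp only [PiLp.sub_apply, PiLp.smul_apply, smul_eq_mul]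
    field_simp
    ring
  rw [hfin] at hr4D
  exact hr4D

end S9

/-- homothety of illumination curve and its centroid curve is equivalent to
constant affine distance between chord endpoints. -/
theorem stmt9
    (γ : ℝ → R2) (L : ℝ) (hL : 0 < L)
    (hγ : ContDiff ℝ 3 γ)
    (hper : ∀ s, γ (s + L) = γ s)
    (hreg : ∀ s, deriv γ s ≠ 0)
    (hinj : Set.InjOn γ (Set.Ico 0 L))
    (hor : 0 < ∫ s in (0:ℝ)..L, det2 (γ s) (deriv γ s))
    (hcurv : ∀ s, 0 < det2 (deriv γ s) (deriv (deriv γ) s))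
    (K : Set R2) (hKconv : Convex ℝ K) (hKcomp : IsCompact K)
    (hKint : (interior K).Nonempty) (hKbd : frontier K = Set.range γ)
    (δ' : ℝ) (hδ0 : 0 < δ')
    (t : ℝ → ℝ) (ht : ContDiff ℝ 1 t)
    (htrange : ∀ s, s < t s ∧ t s < s + L)
    (hpar : ∀ s, det2 (deriv γ s) (deriv γ (t s)) ≠ 0)
    (hc1 : ∀ s, det2 (γ (t s) - γ s) (deriv γ s) ≠ 0)
    (hc2 : ∀ s, det2 (γ (t s) - γ s) (deriv γ (t s)) ≠ 0)
    (hA : ∀ s, -(1/2) * ∫ u in s..t s, det2 (γ u - tangentPole γ t s) (deriv γ u) = δ')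
    (lam : ℝ) (hlam0 : 0 < lam) (hlam1 : lam < 1) :
    (∃ z : R2, ∀ s, illumCentroid γ t δ' s = z + lam • (tangentPole γ t s - z)) ↔
      (∀ s, -4 * det2 (γ (t s) - γ s) (deriv γ s) * det2 (γ (t s) - γ s) (deriv γ (t s)) /
          det2 (deriv γ s) (deriv γ (t s)) = 24 * δ' * lam) := by
  have hδ : δ' ≠ 0 := ne_of_gt hδ0
  have h6δ : (6:ℝ) * δ' ≠ 0 := by positivity
  have hder : ∀ s, HasDerivAt (illumCentroid γ t δ')
      ((S9.f0 γ t s / (6*δ')) • S9.v3 γ t s) s :=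
    fun s => S9.hasDerivAt_illumCentroid hγ ht hpar hc1 hδ0 hA s
  have key : ∀ s, -4 * det2 (γ (t s) - γ s) (deriv γ s) * det2 (γ (t s) - γ s) (deriv γ (t s)) /
      det2 (deriv γ s) (deriv γ (t s)) = 4 * S9.f0 γ t s := by
    intro s
    rw [S9.f0, S9.af, S9.ch]
    field_simp
  constructor
  · rintro ⟨z, hz⟩ s
    have h1 : HasDerivAt (illumCentroid γ t δ') (lam • S9.v3 γ t s) s := by
      have h2 : HasDerivAt (fun r => z + lam • (tangentPole γ t r - z))
          (lam • S9.v3 γ t s) s := by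
        have h3 := ((S9.hasDerivAt_tangentPole hγ ht hpar s).sub_const z).const_smul lam
        simpa using h3.const_add z
      have hfe : illumCentroid γ t δ' = fun r => z + lam • (tangentPole γ t r - z) :=
        funext hz
      rw [hfe]; exact h2
    have huniq := (hder s).unique h1
    have h4 : (S9.f0 γ t s / (6*δ') - lam) • S9.v3 γ t s = 0 := by
      rw [sub_smul, huniq, sub_self]
    rcases smul_eq_zero.mp h4 with h5 | h5
    · have h6 : S9.f0 γ t s / (6*δ') = lam := by linarith [sub_eq_zero.mp h5]
      have h7 : S9.f0 γ t s = lam * (6*δ') := (div_eq_iff h6δ).mp h6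
      rw [key s, h7]; ring
    · exact absurd h5 (S9.v3_ne_zero hpar hc2 hcurv s)
  · intro hii
    have hlam' : ∀ s, S9.f0 γ t s / (6*δ') = lam := by
      intro s
      have h1 := hii s
      rw [key s] at h1
      rw [show S9.f0 γ t s = lam * (6*δ') by linarith]
      field_simp
    have hD : ∀ s, HasDerivAt (fun r => illumCentroid γ t δ' r - lam • tangentPole γ t r)
        0 s := by
      intro s
      have h1 := (hder s).sub ((S9.hasDerivAt_tangentPole hγ ht hpar s).const_smul lam)
      rw [hlam' s, sub_self] at h1
      exact h1
    have hconst := is_const_of_deriv_eq_zero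
      (fun s => (hD s).differentiableAt) (fun s => (hD s).deriv)
    refine ⟨(1 - lam)⁻¹ • (illumCentroid γ t δ' 0 - lam • tangentPole γ t 0), fun s => ?_⟩
    have h0 := hconst s 0
    have hl1 : (1 : ℝ) - lam ≠ 0 := by linarith
    ext i
    have h0i := congrArg (fun v : R2 => v i) h0
    simp only [PiLp.sub_apply, PiLp.smul_apply, PiLp.add_apply, smul_eq_mul] at h0i ⊢
    field_simp
    linear_combination (1 - lam) * h0i
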